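/- Let X be a normed space, F : X → ℝⁿ a map with a zero at r ∈ X (F(r)=0), and suppose F is Lipschitz near r with constant L, i.e., ‖F(u)‖ ≤ L‖u−r‖ for u near r. Let p > 1 and α ≥ 0, and define G(u) = (1/‖u−r‖^p + α)F(u) for u ≠ r. Suppose additionally that ‖F(u)‖ ≥ c‖u−r‖ for some c > 0 and all u near r. Then for any sequence uₖ → r with uₖ ≠ r, ‖G(uₖ)‖ ≥ ‖F(uₖ)‖/‖uₖ−r‖^p, and ‖G(uₖ)‖ → ∞; in particular ‖G(uₖ)‖ does not converge to 0. -/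
import Mathlib


open Filter

/-- If the undeflated residual `F` vanishes at `r` at most linearly
(`c‖u-r‖ ≤ ‖F u‖` near `r`) and is Lipschitz near `r`, then with deflation
exponent `p > 1` the deflated residual `G` blows up along any sequence
`uₖ → r`, `uₖ ≠ r`. -/
theorem deflated_residual_blows_up
    {X : Type*} [NormedAddCommGroup X] [NormedSpace ℝ X] {n : ℕ}
    (F : X → EuclideanSpace ℝ (Fin n)) (r : X) (hFr : F r = 0)
    (L δ : ℝ) (hδ : 0 < δ)
    (hL : ∀ u, ‖u - r‖ < δ → ‖F u‖ ≤ L * ‖u - r‖)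
    (p α : ℝ) (hp : 1 < p) (hα : 0 ≤ α)
    (G : X → EuclideanSpace ℝ (Fin n))
    (hG : ∀ u, u ≠ r → G u = (1 / ‖u - r‖ ^ p + α) • F u)
    (c : ℝ) (hc : 0 < c)
    (hlow : ∀ u, ‖u - r‖ < δ → c * ‖u - r‖ ≤ ‖F u‖)
    (u : ℕ → X) (hu : Tendsto u atTop (nhds r)) (hune : ∀ k, u k ≠ r) :
    (∀ k, u k ≠ r → ‖F (u k)‖ / ‖u k - r‖ ^ p ≤ ‖G (u k)‖) ∧
      Tendsto (fun k => ‖G (u k)‖) atTop atTop := by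
  have hd : ∀ k, 0 < ‖u k - r‖ := fun k => by
    rw [norm_pos_iff, sub_ne_zero]; exact hune k
  have hdp : ∀ k, 0 < ‖u k - r‖ ^ p := fun k => Real.rpow_pos_of_pos (hd k) p
  have key : ∀ k, ‖F (u k)‖ / ‖u k - r‖ ^ p ≤ ‖G (u k)‖ := by
    intro k
    rw [hG (u k) (hune k), norm_smul, Real.norm_eq_abs,
      abs_of_nonneg (by positivity)]
    rw [div_eq_mul_inv, mul_comm]
    have h1 : (‖u k - r‖ ^ p)⁻¹ ≤ 1 / ‖u k - r‖ ^ p + α := by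
      rw [one_div]; linarith
    exact mul_le_mul_of_nonneg_right h1 (norm_nonneg _)
  refine ⟨fun k _ => key k, ?_⟩
  -- ‖u k - r‖ → 0
  have hd0 : Tendsto (fun k => ‖u k - r‖) atTop (nhds 0) := by
    have := (tendsto_sub_nhds_zero_iff.2 hu)
    simpa using this.norm
  -- tendsto of d^(p-1) to 0 within Ioi 0
  have hpow : Tendsto (fun k => ‖u k - r‖ ^ (p - 1)) atTop (nhdsWithin 0 (Set.Ioi 0)) := by
    apply tendsto_nhdsWithin_of_tendsto_nhds_of_eventually_within
    · have hcont : Tendsto (fun x : ℝ => x ^ (p - 1)) (nhds 0) (nhds ((0:ℝ) ^ (p - 1))) :=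
        (Real.continuousAt_rpow_const 0 (p - 1) (Or.inr (by linarith))).tendsto
      have h0 : (0:ℝ) ^ (p - 1) = 0 := Real.zero_rpow (by linarith)
      rw [h0] at hcont
      exact hcont.comp hd0
    · exact Eventually.of_forall fun k => Real.rpow_pos_of_pos (hd k) _
  have hinv : Tendsto (fun k => (‖u k - r‖ ^ (p - 1))⁻¹) atTop atTop :=
    hpow.inv_tendsto_nhdsGT_zero
  have hcmul : Tendsto (fun k => c * (‖u k - r‖ ^ (p - 1))⁻¹) atTop atTop :=
    hinv.const_mul_atTop hc
  apply tendsto_atTop_mono' _ _ hcmul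
  have hδev : ∀ᶠ k in atTop, ‖u k - r‖ < δ :=
    hd0.eventually (eventually_lt_nhds hδ) |>.mono (by simp)
  filter_upwards [hδev] with k hk
  have h1 : c * ‖u k - r‖ ≤ ‖F (u k)‖ := hlow (u k) hk
  have h2 : c * (‖u k - r‖ ^ (p - 1))⁻¹ = c * ‖u k - r‖ / ‖u k - r‖ ^ p := by
    rw [Real.rpow_sub (hd k), Real.rpow_one, inv_div, mul_div_assoc']
  calc c * (‖u k - r‖ ^ (p - 1))⁻¹ = c * ‖u k - r‖ / ‖u k - r‖ ^ p := h2
    _ ≤ ‖F (u k)‖ / ‖u k - r‖ ^ p := by gcongr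
    _ ≤ ‖G (u k)‖ := key k
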